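/- arXiv:0808.1617 — 8 statements merged into one kernel-verified Lean document; each statement's English description precedes it below -/
import Mathlib

section
/- Let X be a linear subspace of the Banach space of bounded functions [0,1] → ℝ with supremum norm, such that for each nonempty open subset U of [0,1] there exists f ∈ X for which C(f) is not residual in U. Then {f ∈ X : C(f) is nowhere dense in [0,1]} is a residual G_δ subset of X. -/
/-!
For an open `V`, let `F V` be the set of `f ∈ X` whose continuity points are dense in `V`.
A uniform limit is continuous at every common continuity point of the approximating sequence,
and by Baire these common points are still dense in `V`; so `F V` is closed. Every function in
`F V` is continuous on a residual subset of `V`, and such functions form a linear subspace; if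
`F V` had interior, this subspace would be everything, contradicting the hypothesis. Since
`C(f)` is nowhere dense iff `f ∉ F V` for every nonempty basic open `V`, the set in question is
a countable intersection of dense open sets.
-/

open Set Filter TopologicalSpace

section ContinuityPoints

variable {α : Type*} [TopologicalSpace α]

theorem TopologicalSpace.IsTopologicalBasis.isNowhereDense_iff {B : Set (Set α)}
    (hB : IsTopologicalBasis B) {s : Set α} :
    IsNowhereDense s ↔ ∀ V ∈ B, V.Nonempty → ¬ V ⊆ closure s := by
  rw [IsNowhereDense, ← not_nonempty_iff_eq_empty]
  constructor
  · intro h V hVB hVne hVs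
    exact h (hVne.mono (interior_maximal hVs (hB.isOpen hVB)))
  · rintro h hne
    obtain ⟨V, hVB, hVne, hV⟩ := hB.exists_nonempty_subset hne isOpen_interior
    exact h V hVB hVne (hV.trans interior_subset)

theorem IsOpen.subset_closure_iInter_of_isGδ [BaireSpace α] {ι : Type*} [Countable ι]
    {V : Set α} (hV : IsOpen V) {s : ι → Set α} (hs : ∀ i, IsGδ (s i))
    (hVs : ∀ i, V ⊆ closure (s i)) : V ⊆ closure (⋂ i, s i) := by
  set t : ι → Set α := fun i => s i ∪ (closure V)ᶜ
  have ht_dense : Dense (⋂ i, t i) := by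
    refine dense_iInter_of_Gδ (fun i => (hs i).union isClosed_closure.isOpen_compl.isGδ)
      fun i x => ?_
    by_cases hx : x ∈ closure V
    · exact closure_mono subset_union_left
        (closure_minimal (hVs i) isClosed_closure hx)
    · exact subset_closure (Or.inr hx)
  calc V ⊆ closure (V ∩ ⋂ i, t i) := ht_dense.open_subset_closure_inter hV
    _ ⊆ closure (⋂ i, s i) := closure_mono fun x ⟨hxV, hxt⟩ => mem_iInter.2 fun i =>
        (mem_iInter.1 hxt i).resolve_right (not_not.2 (subset_closure hxV))

theorem isClosed_setOf_subset_closure_continuousAt [BaireSpace α] {β E : Type*}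
    [PseudoMetricSpace β] [PseudoMetricSpace E] (φ : E → α → β)
    (hφ : ∀ f g x, dist (φ f x) (φ g x) ≤ dist f g) {V : Set α} (hV : IsOpen V) :
    IsClosed {f | V ⊆ closure {x | ContinuousAt (φ f) x}} := by
  refine closure_subset_iff_isClosed.1 fun f hf => ?_
  obtain ⟨u, hu, hlim⟩ := mem_closure_iff_seq_limit.1 hf
  have hcont : (⋂ n, {x | ContinuousAt (φ (u n)) x}) ⊆ {x | ContinuousAt (φ f) x} := by
    intro x hx
    refine continuousAt_of_locally_uniform_approx_of_continuousAt fun w hw => ?_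
    obtain ⟨ε, hε, hεw⟩ := Metric.mem_uniformity_dist.1 hw
    obtain ⟨n, hn⟩ := ((Metric.tendsto_nhds.1 hlim) ε hε).exists
    exact ⟨univ, univ_mem, φ (u n), mem_iInter.1 hx n, fun y _ =>
      hεw ((hφ _ _ y).trans_lt (by rwa [dist_comm]))⟩
  exact (hV.subset_closure_iInter_of_isGδ (fun n => IsGδ.setOfPred_continuousAt _) hu).trans
    (closure_mono hcont)

theorem IsOpen.continuousAt_mem_residual_of_subset_closure {β : Type*} [TopologicalSpace β]
    [PseudoMetrizableSpace β] {g : α → β} {V : Set α} (hV : IsOpen V)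
    (hg : V ⊆ closure {x | ContinuousAt g x}) :
    (Subtype.val ⁻¹' {x | ContinuousAt g x} : Set V) ∈ residual V := by
  refine residual_of_dense_Gδ ((IsGδ.setOfPred_continuousAt g).preimage continuous_subtype_val) ?_
  rw [Subtype.dense_iff, Subtype.image_preimage_coe]
  exact fun x hx => hV.inter_closure ⟨hx, hg hx⟩

variable (R : Type*) {M : Type*} [Semiring R] [TopologicalSpace M] [AddCommMonoid M] [Module R M]
  [ContinuousAdd M] [ContinuousConstSMul R M]

def residuallyContinuousOn (V : Set α) : Submodule R (α → M) where
  carrier := {g | (Subtype.val ⁻¹' {x | ContinuousAt g x} : Set V) ∈ residual V}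
  zero_mem' := by
    simp only [mem_ofPred_eq, Pi.zero_def, continuousAt_const, ofPred_true, preimage_univ, univ_mem]
  add_mem' {f g} hf hg := by
    simp only [mem_ofPred_eq] at hf hg ⊢
    exact mem_of_superset (inter_mem hf hg) fun x hx =>
      ContinuousAt.add (f := f) (g := g) (x := (x : α)) hx.1 hx.2
  smul_mem' c g hg := by
    simp only [mem_ofPred_eq] at hg ⊢
    exact mem_of_superset hg fun x hx => ContinuousAt.const_smul (g := g) (b := (x : α)) hx c

@[simp]
theorem mem_residuallyContinuousOn {V : Set α} {g : α → M} :
    g ∈ residuallyContinuousOn R V ↔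
      (Subtype.val ⁻¹' {x | ContinuousAt g x} : Set V) ∈ residual V :=
  Iff.rfl

end ContinuityPoints

section LinearFamilies

variable {α 𝕜 E F : Type*} [TopologicalSpace α] [NontriviallyNormedField 𝕜]
  [SeminormedAddCommGroup E] [NormedSpace 𝕜 E] [SeminormedAddCommGroup F] [NormedSpace 𝕜 F]
  (φ : E →ₗ[𝕜] α → F)

theorem IsOpen.interior_setOf_subset_closure_continuousAt_eq_empty {V : Set α} (hV : IsOpen V)
    {f : E} (hf : φ f ∉ residuallyContinuousOn 𝕜 V) :
    interior {f | V ⊆ closure {x | ContinuousAt (φ f) x}} = ∅ := by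
  have hsub : {f | V ⊆ closure {x | ContinuousAt (φ f) x}} ⊆
      (residuallyContinuousOn 𝕜 V).comap φ := fun _ hg =>
    hV.continuousAt_mem_residual_of_subset_closure hg
  refine not_nonempty_iff_eq_empty.1 fun hne => hf ?_
  have htop := Submodule.eq_top_of_nonempty_interior' _ (hne.mono (interior_mono hsub))
  exact Submodule.eq_top_iff'.1 htop f

theorem isGδ_setOf_isNowhereDense_continuousAt_and_mem_residual [SecondCountableTopology α]
    [BaireSpace α] (hφ : ∀ f g x, dist (φ f x) (φ g x) ≤ dist f g)
    (h : ∀ V : Set α, IsOpen V → V.Nonempty → ∃ f, φ f ∉ residuallyContinuousOn 𝕜 V) :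
    IsGδ {f | IsNowhereDense {x | ContinuousAt (φ f) x}} ∧
      {f | IsNowhereDense {x | ContinuousAt (φ f) x}} ∈ residual E := by
  obtain ⟨B, hBc, -, hB⟩ := exists_countable_basis α
  set S := {V ∈ B | V.Nonempty}
  have hS : S.Countable := hBc.mono (sep_subset _ _)
  have hclosed (V) (hV : V ∈ S) : IsClosed {f | V ⊆ closure {x | ContinuousAt (φ f) x}} :=
    isClosed_setOf_subset_closure_continuousAt φ hφ (hB.isOpen hV.1)
  have heq : {f | IsNowhereDense {x | ContinuousAt (φ f) x}} =
      ⋂ V ∈ S, {f | V ⊆ closure {x | ContinuousAt (φ f) x}}ᶜ := by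
    ext f
    simp [hB.isNowhereDense_iff, S]
  rw [heq]
  refine ⟨.biInter hS fun V hV => (hclosed V hV).isOpen_compl.isGδ,
    (countable_bInter_mem hS).2 fun V hV =>
      residual_of_dense_open (hclosed V hV).isOpen_compl ?_⟩
  obtain ⟨f, hf⟩ := h V (hB.isOpen hV.1) hV.2
  exact interior_eq_empty_iff_dense_compl.1
    ((hB.isOpen hV.1).interior_setOf_subset_closure_continuousAt_eq_empty φ hf)

end LinearFamilies

theorem stmt_8 (X : Submodule ℝ (lp (fun _ : Set.Icc (0:ℝ) 1 => ℝ) ⊤))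
    (hX : ∀ U : Set (Set.Icc (0:ℝ) 1), IsOpen U → U.Nonempty →
      ∃ f ∈ X, ¬ IsMeagre
        (Subtype.val ⁻¹' {x | ¬ ContinuousAt (⇑f) x} : Set U)) :
    IsGδ {f : X | IsNowhereDense
        {x : Set.Icc (0:ℝ) 1 | ContinuousAt (⇑(f : lp (fun _ : Set.Icc (0:ℝ) 1 => ℝ) ⊤)) x}} ∧
    IsMeagre {f : X | IsNowhereDense
        {x : Set.Icc (0:ℝ) 1 | ContinuousAt (⇑(f : lp (fun _ : Set.Icc (0:ℝ) 1 => ℝ) ⊤)) x}}ᶜ := by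
  let φ : X →ₗ[ℝ] Set.Icc (0:ℝ) 1 → ℝ :=
    { toFun := fun f => ⇑(f : lp (fun _ : Set.Icc (0:ℝ) 1 => ℝ) ⊤)
      map_add' := fun _ _ => lp.coeFn_add _ _
      map_smul' := fun _ _ => lp.coeFn_smul _ _ }
  have hφ (f g : X) (x) : dist (φ f x) (φ g x) ≤ dist f g := by
    simpa [φ, dist_eq_norm] using
      lp.norm_apply_le_norm ENNReal.top_ne_zero (f - g : X).1 x
  have hdiscont (V : Set (Set.Icc (0:ℝ) 1)) (hV : IsOpen V) (hne : V.Nonempty) :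
      ∃ f, φ f ∉ residuallyContinuousOn ℝ V := by
    obtain ⟨f, hfX, hf⟩ := hX V hV hne
    refine ⟨⟨f, hfX⟩, fun hmem => hf ?_⟩
    simpa [IsMeagre, ← preimage_compl, compl_ofPred, φ] using hmem
  rw [IsMeagre, compl_compl]
  exact isGδ_setOf_isNowhereDense_continuousAt_and_mem_residual φ hφ hdiscont
end

section
/- Let X be a linear subspace of the bounded functions on [0,1] (with sup norm) such that inf_{f∈X} μ(C(f)) = 0, where μ is Lebesgue measure. Then {f ∈ X : μ(C(f)) = 0} is a residual G_δ subset of X. -/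
/-!
The map `f ↦ μ (C f)` is upper semicontinuous for the sup norm: `C f` is the decreasing
intersection of the open sets where `f` oscillates by at most `r`, and a uniform perturbation of
size `δ` raises oscillations by at most `2δ`. So `{f | μ (C f) = 0} = ⋂ₙ {f | μ (C f) < 1/n}` is a
countable intersection of open sets. These are dense: for `f, h ∈ X` the sets `C (f + t h) \ C h`,
`t ∈ ℝ`, are pairwise disjoint, so `μ (C (f + t h)) ≤ μ (C h)` for all but countably many `t`,
in particular for arbitrarily small `t`.
-/

open Set MeasureTheory Filter Topology
open scoped ENNReal

section Oscillation

variable {α β : Type*} [TopologicalSpace α] [PseudoMetricSpace β]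

def nhdsOscLE (f : α → β) (r : ℝ) : Set α :=
  {x | ∃ u ∈ 𝓝 x, ∀ y ∈ u, ∀ z ∈ u, dist (f y) (f z) ≤ r}

theorem isOpen_nhdsOscLE (f : α → β) (r : ℝ) : IsOpen (nhdsOscLE f r) := by
  refine isOpen_iff_mem_nhds.2 fun x ⟨u, hu, hosc⟩ => ?_
  filter_upwards [eventually_eventually_nhds.2 hu] with y hy
  exact ⟨u, hy, hosc⟩

theorem nhdsOscLE_mono (f : α → β) : Monotone (nhdsOscLE f) :=
  fun _ _ hrs _ ⟨u, hu, hosc⟩ => ⟨u, hu, fun y hy z hz => (hosc y hy z hz).trans hrs⟩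

theorem setOf_continuousAt_subset_nhdsOscLE (f : α → β) {r : ℝ} (hr : 0 < r) :
    {x | ContinuousAt f x} ⊆ nhdsOscLE f r := by
  intro x hx
  refine ⟨_, hx (Metric.closedBall_mem_nhds (f x) (half_pos hr)), fun y hy z hz => ?_⟩
  calc dist (f y) (f z) ≤ dist (f y) (f x) + dist (f z) (f x) := dist_triangle_right _ _ _
    _ ≤ r / 2 + r / 2 := add_le_add hy hz
    _ = r := add_halves r

theorem biInter_nhdsOscLE (f : α → β) : ⋂ r > 0, nhdsOscLE f r = {x | ContinuousAt f x} := by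
  refine subset_antisymm (fun x hx => ?_)
    fun x hx => mem_iInter₂.2 fun r hr => setOf_continuousAt_subset_nhdsOscLE f hr hx
  refine Metric.continuousAt_iff'.2 fun ε hε => ?_
  obtain ⟨u, hu, hosc⟩ := mem_iInter₂.1 hx (ε / 2) (half_pos hε)
  filter_upwards [hu] with y hy
  exact (hosc y hy x (mem_of_mem_nhds hu)).trans_lt (half_lt_self hε)

theorem nhdsOscLE_subset_of_dist_le {f g : α → β} {δ : ℝ} (h : ∀ x, dist (f x) (g x) ≤ δ)
    (r : ℝ) : nhdsOscLE g r ⊆ nhdsOscLE f (r + 2 * δ) := by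
  rintro x ⟨u, hu, hosc⟩
  refine ⟨u, hu, fun y hy z hz => ?_⟩
  calc dist (f y) (f z) ≤ dist (f y) (g y) + dist (g y) (g z) + dist (g z) (f z) :=
        dist_triangle4 _ _ _ _
    _ ≤ δ + r + δ := by
        gcongr
        exacts [h y, hosc y hy z hz, dist_comm (f z) (g z) ▸ h z]
    _ = r + 2 * δ := by ring

end Oscillation

section Semicontinuity

theorem setOf_eq_zero_eq_iInter_lt_inv {X : Type*} (F : X → ℝ≥0∞) :
    {x | F x = 0} = ⋂ n : ℕ, {x | F x < (n : ℝ≥0∞)⁻¹} := by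
  ext x
  simp only [mem_ofPred_eq, mem_iInter]
  refine ⟨fun h n => h ▸ ENNReal.inv_pos.2 (ENNReal.natCast_ne_top n), fun h => ?_⟩
  by_contra hx
  obtain ⟨n, hn⟩ := ENNReal.exists_inv_nat_lt hx
  exact lt_asymm (h n) hn

variable {X : Type*} [TopologicalSpace X] {F : X → ℝ≥0∞}

theorem UpperSemicontinuous.isGδ_setOf_eq_zero (hF : UpperSemicontinuous F) :
    IsGδ {x | F x = 0} := by
  rw [setOf_eq_zero_eq_iInter_lt_inv]
  exact .iInter fun n => (hF.isOpen_preimage _).isGδ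

theorem UpperSemicontinuous.setOf_eq_zero_mem_residual (hF : UpperSemicontinuous F)
    (hdense : ∀ c > 0, Dense {x | F x < c}) : {x | F x = 0} ∈ residual X := by
  rw [setOf_eq_zero_eq_iInter_lt_inv]
  exact countable_iInter_mem.2 fun n => residual_of_dense_open (hF.isOpen_preimage _)
    (hdense _ (ENNReal.inv_pos.2 (ENNReal.natCast_ne_top n)))

end Semicontinuity

theorem pairwise_disjoint_setOf_continuousAt_add_smul_diff {α E : Type*} [TopologicalSpace α]
    [AddCommGroup E] [Module ℝ E] [TopologicalSpace E] [IsTopologicalAddGroup E]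
    [ContinuousConstSMul ℝ E] (f h : α → E) :
    Pairwise (Function.onFun Disjoint
      fun t : ℝ => {x | ContinuousAt (f + t • h) x} \ {x | ContinuousAt h x}) := by
  intro s t hst
  refine Set.disjoint_left.2 fun x ⟨hs, hx⟩ ⟨ht, _⟩ => hx ?_
  have hdiff : ContinuousAt ((s - t)⁻¹ • ((f + s • h) - (f + t • h))) x := (hs.sub ht).const_smul _
  rwa [add_sub_add_left_eq_sub, ← sub_smul, smul_smul, inv_mul_cancel₀ (sub_ne_zero.2 hst),
    one_smul] at hdiff

section Measure

variable {α : Type*} [TopologicalSpace α] [MeasurableSpace α] [OpensMeasurableSpace α]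
  (μ : Measure α)

theorem exists_pos_forall_measure_setOf_continuousAt_lt [IsFiniteMeasure μ] {β : Type*}
    [PseudoMetricSpace β] {f : α → β} {c : ℝ≥0∞} (hc : μ {x | ContinuousAt f x} < c) :
    ∃ δ > 0, ∀ g : α → β, (∀ x, dist (f x) (g x) ≤ δ) → μ {x | ContinuousAt g x} < c := by
  have hlim : Tendsto (fun r => μ (nhdsOscLE f r)) (𝓝[>] 0) (𝓝 (μ {x | ContinuousAt f x})) := by
    rw [← biInter_nhdsOscLE]
    exact tendsto_measure_biInter_gt
      (fun r _ => (isOpen_nhdsOscLE f r).measurableSet.nullMeasurableSet)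
      (fun _ _ _ hrs => nhdsOscLE_mono f hrs) ⟨1, one_pos, measure_ne_top μ _⟩
  obtain ⟨r, hrc, hr⟩ := ((hlim.eventually_lt_const hc).and self_mem_nhdsWithin).exists
  refine ⟨r / 3, by positivity, fun g hg => (measure_mono ?_).trans_lt hrc⟩
  calc {x | ContinuousAt g x} ⊆ nhdsOscLE g (r / 3) :=
        setOf_continuousAt_subset_nhdsOscLE g (by positivity)
    _ ⊆ nhdsOscLE f (r / 3 + 2 * (r / 3)) := nhdsOscLE_subset_of_dist_le hg _
    _ = nhdsOscLE f r := by ring_nf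

variable {E : Type*} [NormedAddCommGroup E]

local notation "ℓ∞" => lp (fun _ : α => E) ⊤

theorem upperSemicontinuous_measure_setOf_continuousAt [IsFiniteMeasure μ] :
    UpperSemicontinuous fun f : ℓ∞ => μ {x | ContinuousAt f x} := by
  intro f c hc
  obtain ⟨δ, hδ, hg⟩ := exists_pos_forall_measure_setOf_continuousAt_lt μ hc
  filter_upwards [Metric.closedBall_mem_nhds f hδ] with g hfg
  refine hg g fun x => ?_
  calc dist (f x) (g x) = ‖(f - g) x‖ := by rw [dist_eq_norm, lp.coeFn_sub, Pi.sub_apply]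
    _ ≤ ‖f - g‖ := lp.norm_apply_le_norm ENNReal.top_ne_zero _ x
    _ ≤ δ := by rwa [← dist_eq_norm, dist_comm]

variable [NormedSpace ℝ E]

theorem countable_setOf_measure_continuousAt_lt_add_smul [SFinite μ] (f h : α → E) :
    {t : ℝ | μ {x | ContinuousAt h x} < μ {x | ContinuousAt (f + t • h) x}}.Countable := by
  refine (Measure.countable_meas_pos_of_disjoint_iUnion (μ := μ) (fun t => ?_)
    (pairwise_disjoint_setOf_continuousAt_add_smul_diff f h)).mono fun t ht => ?_
  · exact (IsGδ.setOfPred_continuousAt _).measurableSet.diff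
      (IsGδ.setOfPred_continuousAt _).measurableSet
  · by_contra hnull
    exact ht.not_ge (measure_mono_ae (ae_le_set.2 (not_lt.1 hnull |>.antisymm bot_le)))

theorem dense_setOf_measure_continuousAt_lt [SFinite μ] (X : Submodule ℝ ℓ∞) {h : X}
    {c : ℝ≥0∞} (hc : μ {x | ContinuousAt (h : ℓ∞) x} < c) :
    Dense {f : X | μ {x | ContinuousAt (f : ℓ∞) x} < c} := by
  intro f
  let line : ℝ → X := fun t => f + t • h
  have hT := (countable_setOf_measure_continuousAt_lt_add_smul μ (f : ℓ∞) (h : ℓ∞)).dense_compl ℝ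
  have hline : MapsTo line
      {t | μ {x | ContinuousAt (h : ℓ∞) x} < μ {x | ContinuousAt (⇑(f : ℓ∞) + t • ⇑(h : ℓ∞)) x}}ᶜ
      {f : X | μ {x | ContinuousAt (f : ℓ∞) x} < c} := fun t ht => by
    simp only [line, mem_ofPred_eq, Submodule.coe_add, Submodule.coe_smul, lp.coeFn_add,
      lp.coeFn_smul]
    exact (not_lt.1 (notMem_ofPred_iff.1 ht)).trans_lt hc
  have hf : f ∈ line '' closure _ := ⟨0, hT.closure_eq ▸ mem_univ 0, by simp [line]⟩
  exact closure_mono hline.image_subset (image_closure_subset_closure_image (by fun_prop) hf)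

end Measure

theorem stmt_9 (X : Submodule ℝ (lp (fun _ : Set.Icc (0:ℝ) 1 => ℝ) ⊤))
    (hX : ⨅ f : X,
      volume {x : Set.Icc (0:ℝ) 1 | ContinuousAt (⇑(f : lp (fun _ : Set.Icc (0:ℝ) 1 => ℝ) ⊤)) x} = 0) :
    IsGδ {f : X |
      volume {x : Set.Icc (0:ℝ) 1 | ContinuousAt (⇑(f : lp (fun _ : Set.Icc (0:ℝ) 1 => ℝ) ⊤)) x} = 0} ∧
    IsMeagre {f : X |
      volume {x : Set.Icc (0:ℝ) 1 | ContinuousAt (⇑(f : lp (fun _ : Set.Icc (0:ℝ) 1 => ℝ) ⊤)) x} = 0}ᶜ := by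
  have hF := (upperSemicontinuous_measure_setOf_continuousAt volume).comp
    (continuous_subtype_val (p := (· ∈ X)))
  refine ⟨hF.isGδ_setOf_eq_zero, ?_⟩
  rw [IsMeagre, compl_compl]
  refine hF.setOf_eq_zero_mem_residual fun c hc => ?_
  obtain ⟨h, hh⟩ := iInf_lt_iff.1 (hX ▸ hc)
  exact dense_setOf_measure_continuousAt_lt volume X hh
end

section
/- In the Banach space of all bounded functions [0,1] → ℝ with the supremum norm, the set {f : ∃ t > 0, ∀ x ∈ [0,1], ω(f,x) ≥ t} is open. -/
open Set

noncomputable def osc (f : (Set.Icc (0:ℝ) 1) → ℝ) (x : Set.Icc (0:ℝ) 1) : ENNReal :=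
  ⨅ (U : Set (Set.Icc (0:ℝ) 1)) (_ : IsOpen U) (_ : x ∈ U), EMetric.diam (f '' U)

theorem stmt_10 :
    IsOpen {f : lp (fun _ : Set.Icc (0:ℝ) 1 => ℝ) ⊤ |
      ∃ t : ℝ, 0 < t ∧ ∀ x, ENNReal.ofReal t ≤ osc (⇑f) x} := by
  rw [Metric.isOpen_iff]
  rintro f ⟨t, ht, hf⟩
  refine ⟨t / 4, by linarith, fun g hg => ?_⟩
  refine ⟨t / 2, by linarith, fun x => ?_⟩
  have hdist : dist g f < t / 4 := hg
  -- pointwise bound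
  have hpt : ∀ u : Set.Icc (0:ℝ) 1, edist (f u) (g u) ≤ ENNReal.ofReal (t / 4) := by
    intro u
    rw [edist_dist]
    apply ENNReal.ofReal_le_ofReal
    have h1 : ‖(g - f) u‖ ≤ ‖g - f‖ := lp.norm_apply_le_norm (by norm_num) (g - f) u
    have h2 : (g - f) u = g u - f u := by
      simp [lp.coeFn_sub]
    rw [h2] at h1
    rw [dist_comm, Real.dist_eq]
    calc |g u - f u| = ‖g u - f u‖ := rfl
      _ ≤ ‖g - f‖ := h1
      _ ≤ t / 4 := by rw [← dist_eq_norm] at *; exact le_of_lt hdist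
  refine le_iInf fun U => le_iInf fun hU => le_iInf fun hx => ?_
  -- diam f''U ≤ diam g''U + t/2
  have hdiam : EMetric.diam ((⇑f) '' U) ≤ EMetric.diam ((⇑g) '' U) + ENNReal.ofReal (t / 2) := by
    apply EMetric.diam_le
    rintro _ ⟨u, hu, rfl⟩ _ ⟨v, hv, rfl⟩
    calc edist (f u) (f v)
        ≤ edist (f u) (g u) + edist (g u) (g v) + edist (g v) (f v) := edist_triangle4 _ _ _ _
      _ ≤ ENNReal.ofReal (t / 4) + EMetric.diam ((⇑g) '' U) + ENNReal.ofReal (t / 4) := by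
          gcongr
          · exact hpt u
          · exact EMetric.edist_le_diam_of_mem ⟨u, hu, rfl⟩ ⟨v, hv, rfl⟩
          · rw [edist_comm]; exact hpt v
      _ = EMetric.diam ((⇑g) '' U) + ENNReal.ofReal (t / 2) := by
          have h4 : ENNReal.ofReal (t/4) + ENNReal.ofReal (t/4) = ENNReal.ofReal (t/2) := by
            rw [← ENNReal.ofReal_add (by linarith) (by linarith)]; ring_nf
          rw [add_comm (ENNReal.ofReal (t/4)), add_assoc, h4]
  have hoscf : ENNReal.ofReal t ≤ EMetric.diam ((⇑f) '' U) :=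
    le_trans (hf x) (iInf_le_of_le U (iInf_le_of_le hU (iInf_le _ hx)))
  have : ENNReal.ofReal t ≤ EMetric.diam ((⇑g) '' U) + ENNReal.ofReal (t / 2) :=
    le_trans hoscf hdiam
  have ht2 : ENNReal.ofReal t = ENNReal.ofReal (t / 2) + ENNReal.ofReal (t / 2) := by
    rw [← ENNReal.ofReal_add (by linarith) (by linarith)]; ring_nf
  rw [ht2] at this
  exact (ENNReal.add_le_add_iff_right ENNReal.ofReal_ne_top).mp this
end

section
/- In the Banach space b of all bounded functions [0,1] → ℝ with the supremum norm, the set of nowhere continuous functions (functions f with C(f) = ∅) is a residual subset of b; i.e. a typical bounded function is nowhere continuous. -/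
open Set

noncomputable section

open Classical in
/-- rational points and irrational points are both close to any point of `Icc 0 1`. -/
lemma aux_near (x : Set.Icc (0:ℝ) 1) (η : ℝ) (hη : 0 < η) :
    ∃ y z : Set.Icc (0:ℝ) 1, ¬ Irrational (y:ℝ) ∧ Irrational (z:ℝ) ∧
      |(y:ℝ) - x| < η ∧ |(z:ℝ) - x| < η := by
  obtain ⟨hx0, hx1⟩ := x.2
  set a : ℝ := max 0 ((x:ℝ) - η) with ha
  set b : ℝ := min 1 ((x:ℝ) + η) with hb
  have hab : a < b := by
    rcases lt_or_eq_of_le hx1 with h | h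
    · exact max_lt (lt_min one_pos (by linarith)) (lt_min (by linarith) (by linarith))
    · exact max_lt (lt_min one_pos (by linarith)) (lt_min (by linarith) (by linarith))
  have hsub : ∀ t : ℝ, a < t → t < b → (t ∈ Set.Icc (0:ℝ) 1 ∧ |t - (x:ℝ)| < η) := by
    intro t h1 h2
    have h0a : (0:ℝ) ≤ a := le_max_left _ _
    have hxa : (x:ℝ) - η ≤ a := le_max_right _ _
    have hb1 : b ≤ 1 := min_le_left _ _
    have hbx : b ≤ (x:ℝ) + η := min_le_right _ _
    refine ⟨⟨by linarith, by linarith⟩, abs_sub_lt_iff.2 ⟨by linarith, by linarith⟩⟩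
  obtain ⟨q, hq1, hq2⟩ := exists_rat_btwn hab
  obtain ⟨z, hz, hz1, hz2⟩ := exists_irrational_btwn hab
  obtain ⟨hqmem, hqd⟩ := hsub q hq1 hq2
  obtain ⟨hzmem, hzd⟩ := hsub z hz1 hz2
  exact ⟨⟨(q:ℝ), hqmem⟩, ⟨z, hzmem⟩, Rat.not_irrational q, hz, hqd, hzd⟩

lemma aux_int (δ : ℝ) (hδ : 0 < δ) (k : ℤ) : δ/2 ≤ |δ * k + δ/2| := by
  rcases le_or_gt 0 k with h | h
  · have : (0:ℝ) ≤ (k:ℝ) := by exact_mod_cast h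
    rw [abs_of_nonneg (by nlinarith)]
    nlinarith
  · have hk : k ≤ -1 := by omega
    have : (k:ℝ) ≤ -1 := by exact_mod_cast hk
    rw [abs_of_nonpos (by nlinarith)]
    nlinarith

open Classical in
theorem stmt_11 :
    IsMeagre {f : lp (fun _ : Set.Icc (0:ℝ) 1 => ℝ) ⊤ |
      ∃ x, ContinuousAt (⇑f) x} := by
  set S : Set (lp (fun _ : Set.Icc (0:ℝ) 1 => ℝ) ⊤) :=
    {f | ∃ x, ContinuousAt (⇑f) x} with hS
  rw [IsMeagre]
  refine Filter.mem_of_superset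
    (residual_of_dense_open (s := (closure S)ᶜ) isClosed_closure.isOpen_compl ?_) ?_
  swap
  · intro g hg
    exact fun hgs => hg (subset_closure hgs)
  -- density of the complement of the closure
  rw [Metric.dense_iff]
  intro f ε hε
  set δ : ℝ := ε/4 with hδdef
  have hδ : 0 < δ := by positivity
  -- the perturbed function
  set g0 : (Set.Icc (0:ℝ) 1) → ℝ := fun y =>
    δ * ⌊f y / δ⌋ + (if Irrational (y:ℝ) then 0 else δ/2) with hg0
  have hfloor : ∀ y : Set.Icc (0:ℝ) 1, |δ * ⌊f y / δ⌋ - f y| ≤ δ := by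
    intro y
    have h1 : (⌊f y / δ⌋ : ℝ) ≤ f y / δ := Int.floor_le _
    have h2 : f y / δ - 1 < ⌊f y / δ⌋ := Int.sub_one_lt_floor _
    rw [abs_le]
    have ht : δ * (f y / δ) = f y := by field_simp
    constructor
    · nlinarith [mul_lt_mul_of_pos_left h2 hδ]
    · nlinarith [mul_le_mul_of_nonneg_left h1 hδ.le]
  have hg0near : ∀ y : Set.Icc (0:ℝ) 1, |g0 y - f y| ≤ 3*δ/2 := by
    intro y
    have := hfloor y
    simp only [hg0]
    split <;> [skip; skip] <;>
      · rw [abs_le] at *; constructor <;> linarith [this.1, this.2]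
  have hmem : Memℓp g0 ⊤ := by
    apply memℓp_infty
    refine ⟨‖f‖ + 3*δ/2, ?_⟩
    rintro - ⟨y, rfl⟩
    have h1 := hg0near y
    have h2 : ‖f y‖ ≤ ‖f‖ := lp.norm_apply_le_norm (by simp) f y
    simp only [Real.norm_eq_abs] at *
    calc |g0 y| ≤ |f y| + 3*δ/2 := by
          have := abs_sub_abs_le_abs_sub (g0 y) (f y); linarith
      _ ≤ ‖f‖ + 3*δ/2 := by linarith
  set g : lp (fun _ : Set.Icc (0:ℝ) 1 => ℝ) ⊤ := ⟨g0, hmem⟩ with hg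
  have hgapp : ∀ y, g y = g0 y := fun y => rfl
  have hgf : dist g f < ε := by
    rw [dist_eq_norm]
    have : ‖g - f‖ ≤ 3*δ/2 := by
      apply lp.norm_le_of_forall_le (by positivity)
      intro y
      have : (g - f) y = g y - f y := by
        simp [lp.coeFn_sub, Pi.sub_apply]
      rw [this, Real.norm_eq_abs, hgapp]
      exact hg0near y
    have : 3*δ/2 < ε := by rw [hδdef]; linarith
    linarith
  refine ⟨g, Metric.mem_ball.2 hgf, ?_⟩
  -- g is not in the closure of S
  intro hgcl
  rw [Metric.mem_closure_iff] at hgcl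
  obtain ⟨h, hhS, hdist⟩ := hgcl (δ/16) (by positivity)
  obtain ⟨x, hx⟩ := hhS
  -- pointwise bound |h w - g w| < δ/16
  have hpt : ∀ w : Set.Icc (0:ℝ) 1, |h w - g w| < δ/16 := by
    intro w
    have h1 : ‖(g - h) w‖ ≤ ‖g - h‖ := lp.norm_apply_le_norm (by simp) _ w
    have h2 : (g - h) w = g w - h w := by simp [lp.coeFn_sub, Pi.sub_apply]
    rw [h2, Real.norm_eq_abs] at h1
    rw [← dist_eq_norm] at h1
    rw [abs_sub_comm]
    exact lt_of_le_of_lt h1 hdist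
  -- continuity at x gives a small neighborhood
  rw [Metric.continuousAt_iff] at hx
  obtain ⟨η, hη, hcont⟩ := hx (δ/16) (by positivity)
  obtain ⟨y, z, hyrat, hzirr, hyd, hzd⟩ := aux_near x η hη
  have hdy : dist y x < η := by
    rw [Subtype.dist_eq, Real.dist_eq]; exact hyd
  have hdz : dist z x < η := by
    rw [Subtype.dist_eq, Real.dist_eq]; exact hzd
  have hy := hcont hdy
  have hz' := hcont hdz
  rw [Real.dist_eq] at hy hz'
  -- but the values of g at y and z differ by at least δ/2
  have hosc : δ/2 ≤ |g y - g z| := by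
    rw [hgapp, hgapp]
    simp only [hg0, if_neg (by simpa using hyrat), if_pos hzirr, add_zero]
    have : δ * ⌊f y / δ⌋ + δ/2 - δ * ⌊f z / δ⌋
        = δ * ((⌊f y / δ⌋ : ℤ) - ⌊f z / δ⌋ : ℤ) + δ/2 := by
      push_cast; ring
    rw [this]
    exact aux_int δ hδ _
  have h1 := hpt y
  have h2 := hpt z
  have hgy : |g y - g z| ≤ |g y - h y| + |h y - h x| + |h x - h z| + |h z - g z| := by
    have := abs_sub_le (g y) (h y) (g z)
    have := abs_sub_le (h y) (h z) (g z)
    have := abs_sub_le (h y) (h x) (h z)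
    linarith [abs_sub_comm (h z) (h x) ▸ (le_refl (|h z - h x|))]
  have e1 : |g y - h y| < δ/16 := by rw [abs_sub_comm]; exact h1
  have e3 : |h x - h z| < δ/16 := by rw [abs_sub_comm]; exact hz'
  linarith
end
end

section
/- In the closed subspace of the bounded functions [0,1] → ℝ (sup norm) consisting of Lebesgue measurable bounded functions, the set of nowhere continuous functions is residual. -/
set_option maxHeartbeats 1000000
set_option synthInstance.maxHeartbeats 200000


open Set

noncomputable section Stmt12Aux

open Classical

private abbrev L12 := lp (fun _ : Set.Icc (0:ℝ) 1 => ℝ) ⊤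

private abbrev X12 := {g : L12 // Measurable (⇑g)}

/-- The "bad" set: functions with arbitrarily small local oscillation somewhere. -/
private def T12 : Set X12 :=
  {f | ∀ ε > (0:ℝ), ∃ x : Set.Icc (0:ℝ) 1, ∃ δ > (0:ℝ),
    ∀ y : Set.Icc (0:ℝ) 1, dist y x < δ → |(f : L12) y - (f : L12) x| ≤ ε}

private lemma pt_bound12 (h₁ h₂ : L12) (y : Set.Icc (0:ℝ) 1) :
    |h₁ y - h₂ y| ≤ dist h₁ h₂ := by
  rw [dist_eq_norm]
  have := lp.norm_apply_le_norm ENNReal.top_ne_zero (h₁ - h₂) y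
  rwa [lp.coeFn_sub, Pi.sub_apply, Real.norm_eq_abs] at this

private lemma isClosed_T12 : IsClosed T12 := by
  refine isClosed_of_closure_subset ?_
  intro f hf ε hε
  obtain ⟨f', hf'T, hd⟩ := Metric.mem_closure_iff.1 hf (ε/3) (by linarith)
  obtain ⟨x, δ, hδ, hx⟩ := hf'T (ε/3) (by linarith)
  refine ⟨x, δ, hδ, fun y hy => ?_⟩
  have hd' : dist (f : L12) (f' : L12) < ε/3 := by
    rwa [Subtype.dist_eq] at hd
  have h1 := pt_bound12 (f : L12) (f' : L12) y
  have h2 := pt_bound12 (f : L12) (f' : L12) x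
  have h3 := hx y hy
  have t1 : |(f : L12) y - (f : L12) x| ≤
      |(f : L12) y - (f' : L12) y| + |(f' : L12) y - (f : L12) x| :=
    abs_sub_le _ _ _
  have t2 : |(f' : L12) y - (f : L12) x| ≤
      |(f' : L12) y - (f' : L12) x| + |(f' : L12) x - (f : L12) x| :=
    abs_sub_le _ _ _
  have t3 : |(f' : L12) x - (f : L12) x| = |(f : L12) x - (f' : L12) x| := abs_sub_comm _ _
  linarith

private lemma floor_approx12 (c a : ℝ) (hc : 0 < c) : |c * ⌊a / c⌋ - a| ≤ c := by
  have h1 : (⌊a / c⌋ : ℝ) ≤ a / c := Int.floor_le _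
  have h2 : a / c < ⌊a / c⌋ + 1 := Int.lt_floor_add_one _
  have h3 : c * (⌊a / c⌋ : ℝ) ≤ a := by
    have := mul_le_mul_of_nonneg_left h1 hc.le
    rwa [mul_div_cancel₀ _ hc.ne'] at this
  have h4 : a < c * (⌊a / c⌋ : ℝ) + c := by
    have := mul_lt_mul_of_pos_left h2 hc
    rw [mul_add, mul_one] at this
    calc a = c * (a / c) := by field_simp
    _ < _ := this
  rw [abs_le]; constructor <;> linarith

private lemma parity_sep12 (k : ℤ) (c : ℝ) (hc : 0 < c) : c/2 ≤ |c * k + c/2| := by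
  have h0 : (2 * k + 1 : ℤ) ≠ 0 := by omega
  have h1 : (1:ℝ) ≤ |((2 * k + 1 : ℤ) : ℝ)| := by
    rw [← Int.cast_abs]
    exact_mod_cast Int.one_le_abs h0
  have h2 : c * k + c/2 = (c/2) * ((2 * k + 1 : ℤ) : ℝ) := by push_cast; ring
  rw [h2, abs_mul, abs_of_pos (by linarith : (0:ℝ) < c/2)]
  nlinarith

private lemma exists_near12 (x : Set.Icc (0:ℝ) 1) (δ : ℝ) (hδ : 0 < δ) :
    (∃ y : Set.Icc (0:ℝ) 1, dist y x < δ ∧ ¬ Irrational (y:ℝ)) ∧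
    (∃ y : Set.Icc (0:ℝ) 1, dist y x < δ ∧ Irrational (y:ℝ)) := by
  obtain ⟨hx0, hx1⟩ := x.2
  set a : ℝ := max 0 ((x:ℝ) - δ) with ha
  set b : ℝ := min 1 ((x:ℝ) + δ) with hb
  have hab : a < b := by
    apply max_lt
    · exact lt_min one_pos (by linarith)
    · exact lt_min (by linarith) (by linarith)
  have hmem : ∀ t : ℝ, a < t → t < b → t ∈ Set.Icc (0:ℝ) 1 ∧ |t - (x:ℝ)| < δ := by
    intro t h1 h2
    have ha0 : (0:ℝ) ≤ a := le_max_left _ _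
    have ha1 : (x:ℝ) - δ ≤ a := le_max_right _ _
    have hb1 : b ≤ 1 := min_le_left _ _
    have hb2 : b ≤ (x:ℝ) + δ := min_le_right _ _
    refine ⟨⟨by linarith, by linarith⟩, ?_⟩
    rw [abs_lt]; constructor <;> linarith
  constructor
  · obtain ⟨q, hq1, hq2⟩ := exists_rat_btwn hab
    obtain ⟨hmem1, hmem2⟩ := hmem q hq1 hq2
    exact ⟨⟨(q:ℝ), hmem1⟩, by rwa [Subtype.dist_eq, Real.dist_eq], Rat.not_irrational q⟩
  · obtain ⟨t, ht, ht1, ht2⟩ := exists_irrational_btwn hab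
    obtain ⟨hmem1, hmem2⟩ := hmem t ht1 ht2
    exact ⟨⟨t, hmem1⟩, by rwa [Subtype.dist_eq, Real.dist_eq], ht⟩

private lemma dense_compl_T12 : Dense T12ᶜ := by
  rw [Metric.dense_iff]
  intro f r hr
  set c : ℝ := r/4 with hcdef
  have hc : 0 < c := by positivity
  -- the perturbed function
  set g : Set.Icc (0:ℝ) 1 → ℝ :=
    fun y => c * ⌊(f : L12) y / c⌋ + (if Irrational (y:ℝ) then c/2 else 0) with hg
  have hgf : ∀ y, |g y - (f : L12) y| ≤ c + c/2 := by
    intro y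
    have h1 := floor_approx12 c ((f : L12) y) hc
    have h2 : |(if Irrational (y:ℝ) then c/2 else 0 : ℝ)| ≤ c/2 := by
      split
      · rw [abs_of_nonneg (by linarith)]
      · rw [abs_zero]; linarith
    calc |g y - (f : L12) y|
        = |(c * ⌊(f : L12) y / c⌋ - (f : L12) y) +
            (if Irrational (y:ℝ) then c/2 else 0)| := by rw [hg]; ring_nf
      _ ≤ |c * ⌊(f : L12) y / c⌋ - (f : L12) y| +
            |(if Irrational (y:ℝ) then c/2 else 0 : ℝ)| := abs_add_le _ _
      _ ≤ c + c/2 := add_le_add h1 h2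
  have hmem : Memℓp g ⊤ := by
    apply memℓp_infty
    refine ⟨‖(f : L12)‖ + (c + c/2), ?_⟩
    rintro - ⟨y, rfl⟩
    show ‖g y‖ ≤ _
    have h1 := hgf y
    have h2 : ‖(f : L12) y‖ ≤ ‖(f : L12)‖ :=
      lp.norm_apply_le_norm ENNReal.top_ne_zero _ y
    rw [Real.norm_eq_abs] at h2 ⊢
    have : |g y| ≤ |(f : L12) y| + |g y - (f : L12) y| := by
      have := abs_add_le ((f : L12) y) (g y - (f : L12) y)
      simpa using this
    linarith
  have hgm : Measurable g := by
    apply Measurable.add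
    · exact measurable_const.mul
        (measurable_from_top.comp ((f.2.div_const c).floor))
    · have hsR : MeasurableSet {t : ℝ | Irrational t} :=
        ((Set.countable_range ((↑) : ℚ → ℝ)).measurableSet).compl
      have hs : MeasurableSet {y : Set.Icc (0:ℝ) 1 | Irrational (y:ℝ)} :=
        measurable_subtype_coe hsR
      exact Measurable.ite hs measurable_const measurable_const
  set gl : L12 := ⟨g, hmem⟩ with hgl
  have hglcoe : ⇑gl = g := rfl
  set gX : X12 := ⟨gl, by rw [hglcoe]; exact hgm⟩ with hgX
  have hdist : dist gX f < r := by
    rw [Subtype.dist_eq, dist_eq_norm]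
    have hle : ‖gl - (f : L12)‖ ≤ c + c/2 := by
      apply lp.norm_le_of_forall_le (by linarith)
      intro y
      rw [lp.coeFn_sub, Pi.sub_apply, hglcoe, Real.norm_eq_abs]
      exact hgf y
    have : c + c/2 < r := by rw [hcdef]; linarith
    linarith
  -- g has oscillation ≥ c/2 everywhere
  have hsep : ∀ y z : Set.Icc (0:ℝ) 1, ¬ Irrational (y:ℝ) → Irrational (z:ℝ) →
      c/2 ≤ |g z - g y| := by
    intro y z hy hz
    have : g z - g y = c * (⌊(f : L12) z / c⌋ - ⌊(f : L12) y / c⌋) + c/2 := by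
      rw [hg]; simp only [if_pos hz, if_neg hy]; ring
    rw [this]
    have := parity_sep12 (⌊(f : L12) z / c⌋ - ⌊(f : L12) y / c⌋) c hc
    rwa [Int.cast_sub] at this
  have hnotT : gX ∉ T12 := by
    intro hT
    obtain ⟨x, δ, hδ, hx⟩ := hT (c/4) (by positivity)
    have hcoe : ⇑(gX : L12) = g := hglcoe
    obtain ⟨⟨y, hy1, hy2⟩, ⟨z, hz1, hz2⟩⟩ := exists_near12 x δ hδ
    by_cases hxx : Irrational (x:ℝ)
    · have h1 := hx y hy1
      rw [hcoe] at h1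
      have h2 := hsep y x hy2 hxx
      rw [abs_sub_comm] at h2
      linarith
    · have h1 := hx z hz1
      rw [hcoe] at h1
      have h2 := hsep x z hxx hz2
      linarith
  exact ⟨gX, Metric.mem_ball.2 hdist, hnotT⟩

private lemma subset_T12 :
    {f : X12 | ∃ x, ContinuousAt (⇑(f : L12)) x} ⊆ T12 := by
  rintro f ⟨x, hx⟩ ε hε
  obtain ⟨δ, hδ, hcont⟩ := Metric.continuousAt_iff.1 hx ε hε
  refine ⟨x, δ, hδ, fun y hy => ?_⟩
  have := hcont hy
  rw [Real.dist_eq] at this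
  exact this.le

end Stmt12Aux

theorem stmt_12 :
    IsMeagre {f : {g : lp (fun _ : Set.Icc (0:ℝ) 1 => ℝ) ⊤ // Measurable (⇑g)} |
      ∃ x, ContinuousAt (⇑(f : lp (fun _ : Set.Icc (0:ℝ) 1 => ℝ) ⊤)) x} := by
  have h1 : IsMeagre T12 := by
    rw [IsMeagre]
    exact residual_of_dense_open (isOpen_compl_iff.2 isClosed_T12) dense_compl_T12
  exact h1.mono subset_T12
end

section
/- In the space of bounded functions [0,1] → ℝ having the Baire property, equipped with the supremum norm, the set of nowhere continuous functions is residual. -/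
/-!
Kuratowski: a Baire-measurable `f` is continuous on a residual set `D`. Choose a countable dense
`Q ⊆ D`; since `Q` is meagre, `g = f + ε · 𝟙_Q` is still Baire measurable and is `ε`-close to `f`.
Near any point there is `p ∈ Q` and, by continuity of `f` on `D`, a nearby `q ∈ D \ Q` with
`f q ≈ f p`, so `g` oscillates by at least `ε / 2` everywhere. Then no function within `ε / 6`
of `g` has a point of continuity, so the functions with a continuity point form a nowhere dense
set.
-/

open Set Topology Filter TopologicalSpace

section BaireMeasurable

variable {α β : Type*} [TopologicalSpace α] [TopologicalSpace β]

def BaireMeasurable (f : α → β) : Prop :=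
  ∀ s : Set β, IsOpen s → BaireMeasurableSet (f ⁻¹' s)

theorem BaireMeasurable.congr {f g : α → β} (hf : BaireMeasurable f)
    (h : f =ᶠ[residual α] g) : BaireMeasurable g :=
  fun s hs => (hf s hs).congr (h.preimage s)

theorem BaireMeasurable.exists_mem_residual_continuousOn [SecondCountableTopology β] {f : α → β}
    (hf : BaireMeasurable f) : ∃ D ∈ residual α, ContinuousOn f D := by
  obtain ⟨B, hBc, -, hB⟩ := exists_countable_basis β
  have : ∀ b : B, ∃ u : Set α, IsOpen u ∧ f ⁻¹' b =ᵇ u :=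
    fun b => (hf b (hB.isOpen b.2)).residualEq_isOpen
  choose U hUo hU using this
  have := hBc.to_subtype
  refine ⟨⋂ b : B, {x | x ∈ f ⁻¹' b ↔ x ∈ U b},
    countable_iInter_mem.mpr fun b => (hU b).mono fun x hx => Iff.of_eq hx, fun x hx => ?_⟩
  rw [ContinuousWithinAt, (hB.nhds_hasBasis).tendsto_right_iff]
  rintro b ⟨hbB, hxb⟩
  have hxU : x ∈ U ⟨b, hbB⟩ := (mem_iInter.mp hx ⟨b, hbB⟩).mp hxb
  filter_upwards [nhdsWithin_le_nhds ((hUo _).mem_nhds hxU), self_mem_nhdsWithin] with y hyU hyD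
  exact (mem_iInter.mp hyD ⟨b, hbB⟩).mpr hyU

theorem Set.Countable.isMeagre [T1Space α] [∀ x : α, (𝓝[≠] x).NeBot] {s : Set α}
    (hs : s.Countable) : IsMeagre s := by
  simpa using isMeagre_biUnion hs fun x _ => IsNowhereDense.isMeagre (s := {x}) <| by
    rw [IsNowhereDense, closure_singleton, interior_singleton]

end BaireMeasurable

section Oscillation

variable {α : Type*} [TopologicalSpace α]

def OscillatesBy {β : Type*} [PseudoMetricSpace β] (c : ℝ) (g : α → β) : Prop :=
  ∀ x, ∀ U ∈ 𝓝 x, ∃ p ∈ U, ∃ q ∈ U, c ≤ dist (g p) (g q)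

theorem OscillatesBy.not_continuousAt {β : Type*} [PseudoMetricSpace β] {c : ℝ} {g h : α → β}
    (hg : OscillatesBy c g) (hgh : ∀ y, dist (h y) (g y) < c / 3) (x : α) :
    ¬ContinuousAt h x := by
  intro hx
  have hc : 0 < c := by linarith [hgh x, dist_nonneg (x := h x) (y := g x)]
  obtain ⟨p, hp, q, hq, hpq⟩ :=
    hg x _ (hx (Metric.ball_mem_nhds (h x) (by positivity : 0 < c / 6)))
  have hp' : dist (h p) (h x) < c / 6 := hp
  have hq' : dist (h q) (h x) < c / 6 := hq
  linarith [dist_triangle4 (g p) (h p) (h q) (g q), dist_triangle_right (h p) (h q) (h x),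
    hgh p, hgh q, dist_comm (g p) (h p)]

theorem ContinuousOn.oscillatesBy_add_indicator {f : α → ℝ} {D Q : Set α} (hf : ContinuousOn f D)
    (hQD : Q ⊆ D) (hQ : Dense Q) (hDQ : Dense (D \ Q)) {ε : ℝ} (hε : 0 < ε) :
    OscillatesBy (ε / 2) (f + Q.indicator fun _ => ε) := by
  intro x U hU
  obtain ⟨p, hpU, hpQ⟩ :=
    hQ.inter_open_nonempty _ isOpen_interior ⟨x, mem_interior_iff_mem_nhds.mpr hU⟩
  obtain ⟨V, hV, hVD⟩ := mem_nhdsWithin_iff_exists_mem_nhds_inter.mp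
    (hf p (hQD hpQ) (Metric.ball_mem_nhds (f p) (half_pos hε)))
  obtain ⟨q, ⟨hqV, hqU⟩, hqD, hqQ⟩ := mem_closure_iff_nhds.mp (hDQ p) _
    (inter_mem hV (isOpen_interior.mem_nhds hpU))
  have hfq : |f q - f p| < ε / 2 := hVD ⟨hqV, hqD⟩
  refine ⟨p, interior_subset hpU, q, interior_subset hqU, ?_⟩
  simp only [Pi.add_apply, indicator_of_mem hpQ, indicator_of_notMem hqQ, Real.dist_eq]
  exact le_abs.mpr (Or.inl (by linarith [(abs_lt.mp hfq).2]))

theorem BaireMeasurable.exists_isMeagre_oscillatesBy_add_indicator [BaireSpace α]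
    [SecondCountableTopology α] [T1Space α] [∀ x : α, (𝓝[≠] x).NeBot] {f : α → ℝ}
    (hf : BaireMeasurable f) :
    ∃ Q : Set α, IsMeagre Q ∧ ∀ ε > 0, OscillatesBy (ε / 2) (f + Q.indicator fun _ => ε) := by
  obtain ⟨D, hD, hfD⟩ := hf.exists_mem_residual_continuousOn
  obtain ⟨Q, hQD, hQc, hQ⟩ := (dense_of_mem_residual hD).exists_countable_dense_subset
  have hQm : IsMeagre Q := hQc.isMeagre
  exact ⟨Q, hQm, fun ε hε => hfD.oscillatesBy_add_indicator hQD hQ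
    (dense_of_mem_residual (inter_mem hD hQm)) hε⟩

end Oscillation

theorem lp.dist_apply_le {α : Type*} {E : α → Type*} [∀ i, NormedAddCommGroup (E i)]
    {p : ENNReal} [Fact (1 ≤ p)] (f g : lp E p) (i : α) : dist (f i) (g i) ≤ dist f g := by
  simpa [dist_eq_norm] using
    lp.norm_apply_le_norm (zero_lt_one.trans_le Fact.out).ne' (f - g) i

theorem lp.exists_baireMeasurable_oscillatesBy_near {α : Type*} [TopologicalSpace α]
    [BaireSpace α] [SecondCountableTopology α] [T1Space α] [∀ x : α, (𝓝[≠] x).NeBot]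
    {f : lp (fun _ : α => ℝ) ⊤} (hf : BaireMeasurable ⇑f) {ε : ℝ} (hε : 0 < ε) :
    ∃ g : lp (fun _ : α => ℝ) ⊤, BaireMeasurable ⇑g ∧ dist g f ≤ ε ∧ OscillatesBy (ε / 2) ⇑g := by
  obtain ⟨Q, hQ, hosc⟩ := hf.exists_isMeagre_oscillatesBy_add_indicator
  have hbound : ∀ x, ‖Q.indicator (fun _ => ε) x‖ ≤ ε := fun x => by
    by_cases hx : x ∈ Q <;> simp [hx, abs_of_pos hε, hε.le]
  let e : lp (fun _ : α => ℝ) ⊤ :=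
    ⟨Q.indicator fun _ => ε, memℓp_infty ⟨ε, forall_mem_range.mpr hbound⟩⟩
  refine ⟨f + e, hf.congr ?_, ?_, hosc ε hε⟩
  · filter_upwards [hQ] with x hx
    show f x = f x + Q.indicator (fun _ => ε) x
    rw [indicator_of_notMem hx, add_zero]
  · rw [dist_eq_norm, add_sub_cancel_left]
    exact lp.norm_le_of_forall_le hε.le hbound

theorem stmt_13 :
    IsMeagre {f : {g : lp (fun _ : Set.Icc (0:ℝ) 1 => ℝ) ⊤ //
        ∀ s : Set ℝ, IsOpen s → BaireMeasurableSet ((⇑g) ⁻¹' s)} |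
      ∃ x, ContinuousAt (⇑(f : lp (fun _ : Set.Icc (0:ℝ) 1 => ℝ) ⊤)) x} := by
  refine IsNowhereDense.isMeagre <| interior_eq_empty_iff_dense_compl.mpr <|
    Metric.dense_iff.mpr fun f r hr => ?_
  obtain ⟨g, hgX, hgf, hg⟩ := lp.exists_baireMeasurable_oscillatesBy_near f.2 (half_pos hr)
  refine ⟨⟨g, hgX⟩, hgf.trans_lt (half_lt_self hr), fun hgA => ?_⟩
  obtain ⟨h, ⟨x, hx⟩, hgh⟩ := Metric.mem_closure_iff.mp hgA (r / 12) (by positivity)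
  refine hg.not_continuousAt (fun y => ?_) x hx
  calc dist (h.1 y) (g y) ≤ dist h.1 g := lp.dist_apply_le _ _ y
    _ < r / 2 / 2 / 3 := by rw [dist_comm]; exact hgh.trans_le (by linarith)
end

section
/- Let f : [0,1] → ℝ be bounded with range contained in (a,b), let n ≥ 2 and h = (b−a)/n. For k = 0,…,n−2 set A_k = {x : a + k·h < f(x) < a + (k+2)·h}. Then the A_k cover [0,1], and for any disjoint sets B_k ⊆ A_k covering [0,1], the function g defined by g(x) = a + k·h if x ∈ B_k ∩ ℚ and g(x) = a + (k+1/2)·h if x ∈ B_k \ ℚ satisfies ‖f − g‖ ≤ 2h and ω(g,x) ≥ h/2 for every x ∈ [0,1]. -/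
open Set

/-!
The bands `(a + k h, a + (k + 2) h)` overlap in intervals of length `h`, so every value of `f`
lies in one of them, and both values `a + k h` and `a + (k + 1/2) h` that `g` may take on `B k`
lie within `2 h` of `f`. Every nonempty open subset of `[0,1]` contains a rational and an irrational
point, where `g` takes values in `a + hℤ` and `a + h(ℤ + 1/2)` respectively; these two sets are
`h/2` apart, so `g` oscillates by at least `h/2` everywhere.
-/

lemma exists_mem_band {n : ℕ} (hn : 2 ≤ n) {a h t : ℝ} (hh : 0 < h) (hat : a < t)
    (htn : t < a + n * h) : ∃ k : Fin (n - 1), a + k * h < t ∧ t < a + (k + 2) * h := by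
  set s := (t - a) / h
  have hs₀ : 0 < s := div_pos (sub_pos.2 hat) hh
  have hsn : s < n := (div_lt_iff₀ hh).2 (by linarith)
  set c := ⌈s⌉₊
  have hc : 1 ≤ c := Nat.one_le_iff_ne_zero.2 (Nat.ceil_pos.2 hs₀).ne'
  have hcs : (c : ℝ) - 1 < s := by linarith [Nat.ceil_lt_add_one hs₀.le]
  have hsc : s ≤ c := Nat.le_ceil s
  suffices ∃ k : Fin (n - 1), (k : ℝ) < s ∧ s < k + 2 by
    obtain ⟨k, hks, hsk⟩ := this
    exact ⟨k, by linarith [(lt_div_iff₀ hh).1 hks], by linarith [(div_lt_iff₀ hh).1 hsk]⟩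
  rcases le_total (c - 1) (n - 2) with hcn | hnc
  · refine ⟨⟨c - 1, by omega⟩, ?_, ?_⟩ <;> push_cast [Nat.cast_sub hc] <;> linarith
  · refine ⟨⟨n - 2, by omega⟩, ?_, ?_⟩ <;> push_cast [Nat.cast_sub hn]
    · have : ((n - 2 : ℕ) : ℝ) ≤ (c - 1 : ℕ) := by exact_mod_cast hnc
      push_cast [Nat.cast_sub hn, Nat.cast_sub hc] at this
      linarith
    · linarith

lemma abs_sub_le_two_mul_of_mem_band {a h k y z : ℝ}
    (hy : a + k * h < y ∧ y < a + (k + 2) * h) (hz : z = a + k * h ∨ z = a + (k + 1 / 2) * h) :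
    |y - z| ≤ 2 * h := by
  rw [abs_le]
  rcases hz with rfl | rfl <;> constructor <;> linarith [hy.1, hy.2]

lemma half_le_abs_natCast_mul_sub {h : ℝ} (hh : 0 ≤ h) (a : ℝ) (j l : ℕ) :
    h / 2 ≤ |a + j * h - (a + (l + 1 / 2) * h)| := by
  rcases le_or_gt j l with hjl | hlj
  · have : (j : ℝ) ≤ l := by exact_mod_cast hjl
    exact le_abs.2 (Or.inr (by nlinarith))
  · have : (l : ℝ) + 1 ≤ j := by exact_mod_cast hlj
    exact le_abs.2 (Or.inl (by nlinarith))

lemma Dense.exists_mem_of_isOpen_Icc {s : Set ℝ} (hs : Dense s) {a b : ℝ} (hab : a < b)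
    {U : Set (Icc a b)} (hU : IsOpen U) (hne : U.Nonempty) : ∃ p ∈ U, (p : ℝ) ∈ s := by
  obtain ⟨V, hV, rfl⟩ := isOpen_induced_iff.1 hU
  obtain ⟨x, hx⟩ := hne
  have hx_cl : (x : ℝ) ∈ closure (Ioo a b) := by rw [closure_Ioo hab.ne]; exact x.2
  obtain ⟨p, ⟨hpV, hp⟩, hps⟩ :=
    hs.inter_open_nonempty _ (hV.inter isOpen_Ioo) (mem_closure_iff.1 hx_cl V hV hx)
  exact ⟨⟨p, Ioo_subset_Icc_self hp⟩, hpV, hps⟩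

lemma ofReal_le_osc {g : Icc (0 : ℝ) 1 → ℝ} {x : Icc (0 : ℝ) 1} {δ : ℝ}
    (hg : ∀ U, IsOpen U → x ∈ U → ∃ p ∈ U, ∃ q ∈ U, δ ≤ dist (g p) (g q)) :
    ENNReal.ofReal δ ≤ osc g x := by
  refine le_iInf₂ fun U hU => le_iInf fun hxU => ?_
  obtain ⟨p, hpU, q, hqU, hpq⟩ := hg U hU hxU
  have hδ : ENNReal.ofReal δ ≤ edist (g p) (g q) := by
    rw [edist_dist]; exact ENNReal.ofReal_le_ofReal hpq
  exact hδ.trans (Metric.edist_le_ediam_of_mem (mem_image_of_mem g hpU) (mem_image_of_mem g hqU))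

theorem stmt_14 (f : Set.Icc (0:ℝ) 1 → ℝ) (a b : ℝ)
    (hrange : ∀ x, f x ∈ Set.Ioo a b) (n : ℕ) (hn : 2 ≤ n)
    (h : ℝ) (hh : h = (b - a) / n)
    (A : Fin (n - 1) → Set (Set.Icc (0:ℝ) 1))
    (hA : ∀ k, A k = {x | a + k * h < f x ∧ f x < a + (k + 2) * h}) :
    (⋃ k, A k) = univ ∧
    ∀ B : Fin (n - 1) → Set (Set.Icc (0:ℝ) 1),
      Pairwise (Function.onFun Disjoint B) → (∀ k, B k ⊆ A k) → (⋃ k, B k) = univ →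
      ∀ g : Set.Icc (0:ℝ) 1 → ℝ,
        (∀ k, ∀ x ∈ B k,
          ((∃ q : ℚ, (q : ℝ) = (x : ℝ)) → g x = a + k * h) ∧
          (¬ (∃ q : ℚ, (q : ℝ) = (x : ℝ)) → g x = a + (k + 1 / 2) * h)) →
        (∀ x, |f x - g x| ≤ 2 * h) ∧ ∀ x, ENNReal.ofReal (h / 2) ≤ osc g x := by
  have hab : a < b := by
    obtain ⟨hax, hxb⟩ := hrange ⟨0, left_mem_Icc.2 zero_le_one⟩
    exact hax.trans hxb
  have hn₀ : (0 : ℝ) < n := by exact_mod_cast (by omega : 0 < n)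
  have hpos : 0 < h := hh ▸ div_pos (sub_pos.2 hab) hn₀
  have hb : b = a + n * h := by rw [hh]; field_simp; ring
  have hA_mem : ∀ x k, x ∈ A k ↔ a + k * h < f x ∧ f x < a + (k + 2) * h := fun x k => by
    rw [hA k]; rfl
  refine ⟨iUnion_eq_univ_iff.2 fun x => ?_, fun B _ hBA hB g hg => ?_⟩
  · obtain ⟨k, hk⟩ := exists_mem_band hn hpos (hrange x).1 (hb ▸ (hrange x).2)
    exact ⟨k, (hA_mem x k).2 hk⟩
  have hB_mem := iUnion_eq_univ_iff.1 hB
  refine ⟨fun x => ?_, fun x => ofReal_le_osc fun U hU hxU => ?_⟩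
  · obtain ⟨k, hk⟩ := hB_mem x
    exact abs_sub_le_two_mul_of_mem_band ((hA_mem x k).1 (hBA k hk))
      ((em _).imp (hg k x hk).1 (hg k x hk).2)
  · obtain ⟨p, hpU, hp⟩ := Rat.denseRange_cast.exists_mem_of_isOpen_Icc zero_lt_one hU ⟨x, hxU⟩
    obtain ⟨q, hqU, hq⟩ := dense_irrational.exists_mem_of_isOpen_Icc zero_lt_one hU ⟨x, hxU⟩
    obtain ⟨j, hj⟩ := hB_mem p
    obtain ⟨l, hl⟩ := hB_mem q
    refine ⟨p, hpU, q, hqU, ?_⟩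
    rw [(hg j p hj).1 hp, (hg l q hl).2 hq, Real.dist_eq]
    exact half_le_abs_natCast_mul_sub hpos.le a j l
end

section
/- Let A be a nowhere dense G_δ subset of [0,1]. Then the set X = {f bounded : C(f) ⊇ A} is a linear subspace of the bounded functions, and for every nonempty open subset U of [0,1] there exists f ∈ X such that C(f) is not residual in U. -/
open Set Metric

namespace Stmt17Aux

/-- Find a point of a dense subset of ℝ inside `Icc 0 1` close to `x`. -/
lemma exists_near (x : Set.Icc (0:ℝ) 1) {ε : ℝ} (hε : 0 < ε) {S : Set ℝ} (hS : Dense S) :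
    ∃ y : Set.Icc (0:ℝ) 1, (y : ℝ) ∈ S ∧ dist y x < ε := by
  obtain ⟨hx0, hx1⟩ := x.2
  rcases lt_or_eq_of_le hx1 with hlt | heq
  · have h : (x : ℝ) < min 1 ((x : ℝ) + ε) := lt_min hlt (by linarith)
    obtain ⟨y, hyS, hy1, hy2⟩ := hS.exists_between h
    refine ⟨⟨y, by constructor <;> [linarith; exact le_of_lt (lt_of_lt_of_le hy2 (min_le_left _ _))]⟩,
      hyS, ?_⟩
    have : y < (x : ℝ) + ε := lt_of_lt_of_le hy2 (min_le_right _ _)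
    rw [Subtype.dist_eq, Real.dist_eq, abs_lt]
    constructor <;> simp only [] <;> linarith
  · have h : max 0 (1 - ε) < (x : ℝ) := by
      rw [← heq] at *
      exact max_lt (by linarith) (by linarith)
    obtain ⟨y, hyS, hy1, hy2⟩ := hS.exists_between h
    have hy0 : (0:ℝ) ≤ y := le_of_lt (lt_of_le_of_lt (le_max_left _ _) hy1)
    have hyε : (x:ℝ) - ε < y := by
      have := lt_of_le_of_lt (le_max_right _ _) hy1
      rw [heq]; linarith
    refine ⟨⟨y, hy0, by rw [← heq]; linarith⟩, hyS, ?_⟩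
    rw [Subtype.dist_eq, Real.dist_eq, abs_lt]
    constructor <;> simp only [] <;> linarith

lemma dense_rat : Dense {x : ℝ | ∃ q : ℚ, (q : ℝ) = x} := by
  have := Rat.denseRange_cast (𝕜 := ℝ)
  simpa [DenseRange, Set.range] using this

lemma dense_irrat : Dense {x : ℝ | ¬ ∃ q : ℚ, (q : ℝ) = x} := by
  have := dense_irrational
  apply this.mono
  intro x hx
  simp only [mem_setOf_eq]
  rintro ⟨q, rfl⟩
  exact hx ⟨q, rfl⟩

end Stmt17Aux

open Stmt17Aux

theorem stmt_17 (A : Set (Set.Icc (0:ℝ) 1)) (hA : IsGδ A) (hA' : IsNowhereDense A) :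
    ∃ X : Submodule ℝ (lp (fun _ : Set.Icc (0:ℝ) 1 => ℝ) ⊤),
      (X : Set (lp (fun _ : Set.Icc (0:ℝ) 1 => ℝ) ⊤)) =
        {f : lp (fun _ : Set.Icc (0:ℝ) 1 => ℝ) ⊤ | A ⊆ {x | ContinuousAt (⇑f) x}} ∧
      ∀ U : Set (Set.Icc (0:ℝ) 1), IsOpen U → U.Nonempty →
        ∃ f ∈ X, ¬ IsMeagre
          (Subtype.val ⁻¹' {x | ¬ ContinuousAt (⇑f) x} : Set U) := by
  classical
  -- The submodule
  let X : Submodule ℝ (lp (fun _ : Set.Icc (0:ℝ) 1 => ℝ) ⊤) :=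
    { carrier := setOf (fun (f : lp (fun _ : Set.Icc (0:ℝ) 1 => ℝ) ⊤) => A ⊆ setOf (fun x => ContinuousAt (⇑f) x)),
      add_mem' := by
        intro f g hf hg a ha
        have h1 := hf ha
        have h2 := hg ha
        simp only [mem_setOf_eq] at *
        rw [lp.coeFn_add]
        exact h1.add h2
      zero_mem' := by
        intro a _
        simp only [mem_setOf_eq, lp.coeFn_zero]
        exact continuousAt_const
      smul_mem' := by
        intro c f hf a ha
        have h1 := hf ha
        simp only [mem_setOf_eq] at *
        rw [lp.coeFn_smul]
        exact h1.const_smul c }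
  refine ⟨X, rfl, ?_⟩
  -- The main construction
  intro U hU hUne
  set K : Set (Set.Icc (0:ℝ) 1) := closure A with hK
  -- the distance-like function
  set d : Set.Icc (0:ℝ) 1 → ℝ := fun x => if A.Nonempty then infDist x K else 1 with hd
  have hd0 : ∀ x, 0 ≤ d x := by
    intro x; simp only [hd]; split
    · exact infDist_nonneg
    · norm_num
  have hd1 : ∀ x, d x ≤ 1 := by
    intro x; simp only [hd]; split
    · rename_i h
      obtain ⟨a, ha⟩ := h
      have haK : a ∈ K := subset_closure ha
      calc infDist x K ≤ dist x a := infDist_le_dist_of_mem haK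
        _ ≤ 1 := by
          rw [Subtype.dist_eq, Real.dist_eq, abs_le]
          obtain ⟨h1, h2⟩ := x.2; obtain ⟨h3, h4⟩ := a.2
          constructor <;> linarith
    · exact le_refl 1
  have hdcont : Continuous d := by
    simp only [hd]; split
    · exact continuous_infDist_pt K
    · exact continuous_const
  have hdK : ∀ x ∈ K, d x = 0 := by
    intro x hx
    have : A.Nonempty := by
      by_contra h
      rw [not_nonempty_iff_eq_empty] at h
      simp [hK, h] at hx
    simp only [hd, if_pos this]
    exact infDist_zero_of_mem hx
  have hdpos : ∀ x, x ∉ K → 0 < d x := by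
    intro x hx
    simp only [hd]; split
    · rename_i h
      have hKc : IsClosed K := isClosed_closure
      have hKne : K.Nonempty := h.closure
      exact (hKc.notMem_iff_infDist_pos hKne).1 hx
    · norm_num
  -- the function F
  set F : Set.Icc (0:ℝ) 1 → ℝ := fun x => if ∃ q : ℚ, (q : ℝ) = (x : ℝ) then d x else 0 with hF
  have hFabs : ∀ x, ‖F x‖ ≤ d x := by
    intro x
    simp only [hF, Real.norm_eq_abs]
    split
    · rw [abs_of_nonneg (hd0 x)]
    · rw [abs_zero]; exact hd0 x
  -- F is bounded
  have hFmem : Memℓp F ⊤ := by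
    apply memℓp_infty
    refine ⟨1, ?_⟩
    rintro r ⟨x, rfl⟩
    exact le_trans (hFabs x) (hd1 x)
  set f : lp (fun _ : Set.Icc (0:ℝ) 1 => ℝ) ⊤ := ⟨F, hFmem⟩ with hf
  have hfF : ⇑f = F := rfl
  -- F is continuous at points of K
  have hFcont : ∀ x ∈ K, ContinuousAt F x := by
    intro x hx
    have hFx : F x = 0 := by
      simp only [hF]
      split
      · exact hdK x hx
      · rfl
    rw [ContinuousAt, hFx]
    apply squeeze_zero_norm hFabs
    have : Filter.Tendsto d (nhds x) (nhds (d x)) := hdcont.continuousAt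
    rwa [hdK x hx] at this
  -- F is discontinuous outside K
  have hFdisc : ∀ x, x ∉ K → ¬ ContinuousAt F x := by
    intro x hx hc
    have hcpos : 0 < d x := hdpos x hx
    rw [Metric.continuousAt_iff] at hc
    obtain ⟨δ, hδ, hball⟩ := hc (d x / 2) (by linarith)
    have hdc := Metric.continuousAt_iff.1 (hdcont.continuousAt (x := x)) (d x / 2) (by linarith)
    obtain ⟨δ', hδ', hball'⟩ := hdc
    by_cases hrat : ∃ q : ℚ, (q : ℝ) = (x : ℝ)
    · -- x rational: F x = d x > 0, find an irrational point nearby where F = 0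
      have hFx : F x = d x := by simp only [hF, if_pos hrat]
      obtain ⟨y, hyS, hyd⟩ := exists_near x hδ dense_irrat
      have hFy : F y = 0 := by
        simp only [hF]
        rw [if_neg]
        intro ⟨q, hq⟩
        exact hyS ⟨q, hq⟩
      have := hball hyd
      rw [hFy, hFx, dist_eq_norm, zero_sub, norm_neg, Real.norm_eq_abs,
        abs_of_nonneg (le_of_lt hcpos)] at this
      linarith
    · -- x irrational: F x = 0, find a rational point nearby where F = d ≈ d x > 0
      have hFx : F x = 0 := by simp only [hF, if_neg hrat]
      obtain ⟨y, hyS, hyd⟩ := exists_near x (lt_min hδ hδ') dense_rat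
      have hFy : F y = d y := by
        simp only [hF]
        exact if_pos hyS
      have h1 := hball (lt_of_lt_of_le hyd (min_le_left _ _))
      have h2 := hball' (lt_of_lt_of_le hyd (min_le_right _ _))
      rw [hFy, hFx, dist_eq_norm, sub_zero, Real.norm_eq_abs, abs_of_nonneg (hd0 y)] at h1
      rw [Real.dist_eq, abs_lt] at h2
      linarith [h2.1, h2.2]
  refine ⟨f, ?_, ?_⟩
  · -- f ∈ X
    intro a ha
    simp only [mem_setOf_eq, hfF]
    exact hFcont a (subset_closure ha)
  · -- the discontinuity set is non-meagre in U
    intro hm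
    haveI : LocallyCompactSpace U := hU.locallyCompactSpace
    have hdense : Dense ((Subtype.val ⁻¹' {x | ¬ ContinuousAt (⇑f) x} : Set U)ᶜ) :=
      dense_of_mem_residual hm
    -- there is a point of U outside K
    have hUK : ∃ x ∈ U, x ∉ K := by
      by_contra h
      push_neg at h
      have : U ⊆ interior K := hU.subset_interior_iff.2 h
      rw [hK, hA'] at this
      obtain ⟨x, hx⟩ := hUne
      exact absurd (this hx) (notMem_empty x)
    obtain ⟨x, hxU, hxK⟩ := hUK
    -- the preimage of Kᶜ is a nonempty open subset of U
    set t : Set U := Subtype.val ⁻¹' Kᶜ with ht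
    have htopen : IsOpen t := isClosed_closure.isOpen_compl.preimage continuous_subtype_val
    have htne : t.Nonempty := ⟨⟨x, hxU⟩, hxK⟩
    obtain ⟨y, hy1, hy2⟩ := hdense.inter_open_nonempty t htopen htne
    exact hy2 (hFdisc y.1 hy1)
end
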